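/- arXiv:math/9904085 — 2 statements merged into one kernel-verified Lean document; each statement's English description precedes it below -/
import Mathlib

section
/- Let P(X,x) = Σ_{j=0}^J a_j(x) X^j with a_j ∈ ℂ⟦x₁,…,x_m⟧ and a_J not identically zero. Then there exists a positive integer m(P) such that: whenever h, h' ∈ ℂ⟦x⟧ satisfy P(h(x),x) = 0, P(h'(x),x) = 0, and ∂^α h(0) = ∂^α h'(0) for all multi-indices |α| ≤ m(P), it follows that h = h' as formal power series. -/
noncomputable section

/-- Formal substitution: `substPS F g = g ∘ F`, well-defined (agreeing with the usual
substitution) when each `F j` has zero constant term. -/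
noncomputable def substPS {σ τ : Type*} [Fintype σ] [DecidableEq σ]
    (F : σ → MvPowerSeries τ ℂ) (g : MvPowerSeries σ ℂ) : MvPowerSeries τ ℂ :=
  fun d =>
    MvPowerSeries.coeff (R := ℂ) d
      ((MvPolynomial.aeval F)
        (MvPowerSeries.trunc ℂ
          (Finsupp.equivFunOnFinite.symm fun _ => (d.sum fun _ v => v) + 1) g))

/-- Formal partial derivative of a multivariate formal power series. -/
noncomputable def pderivPS {σ : Type*} (i : σ) (f : MvPowerSeries σ ℂ) : MvPowerSeries σ ℂ :=
  fun d => ((d i : ℂ) + 1) * MvPowerSeries.coeff (R := ℂ) (d + Finsupp.single i 1) f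

/-- Setting the second group of variables equal to `0` in a formal power series. -/
noncomputable def setSnd0 {A B : Type*} (f : MvPowerSeries (A ⊕ B) ℂ) : MvPowerSeries A ℂ :=
  fun d => MvPowerSeries.coeff (R := ℂ) (Finsupp.mapDomain Sum.inl d) f

/-- A formal power series is convergent iff its coefficients grow at most geometrically. -/
def IsConvergentPS {σ : Type*} (f : MvPowerSeries σ ℂ) : Prop :=
  ∃ C r : ℝ, 0 < r ∧ ∀ d : σ →₀ ℕ, ‖MvPowerSeries.coeff (R := ℂ) d f‖ ≤ C * r ^ (d.sum fun _ v => v)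

end

/-!
A polynomial equation with nonzero leading coefficient over the integral domain `ℂ⟦x⟧` has only
finitely many roots, and finitely many distinct power series are already told apart by their
coefficients of degree at most some `N`.
-/

open Filter

open Polynomial in
theorem finite_setOf_sum_mul_pow_eq_zero {R : Type*} [CommRing R] [IsDomain R] {J : ℕ}
    (a : Fin (J + 1) → R) (ha : a (Fin.last J) ≠ 0) :
    {x : R | ∑ j : Fin (J + 1), a j * x ^ (j : ℕ) = 0}.Finite := by
  set p : R[X] := ∑ j : Fin (J + 1), C (a j) * X ^ (j : ℕ)
  have hp : p ≠ 0 := by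
    have hlast (j : Fin (J + 1)) : J = (j : ℕ) ↔ j = Fin.last J := by
      rw [Fin.ext_iff, Fin.val_last, eq_comm]
    refine ne_of_apply_ne (coeff · J) ?_
    simpa [p, finsetSum_coeff, coeff_C_mul, coeff_X_pow, hlast] using ha
  refine (finite_setOfPred_isRoot hp).subset fun x hx => ?_
  simpa [p, eval_finsetSum] using hx

namespace MvPowerSeries

variable {σ R : Type*} [Semiring R]

theorem eventually_eq_of_coeff_eq_of_degree_le (f g : MvPowerSeries σ R) :
    ∀ᶠ N in atTop,
      (∀ d : σ →₀ ℕ, (d.sum fun _ v => v) ≤ N → coeff d f = coeff d g) → f = g := by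
  by_cases hfg : f = g
  · exact .of_forall fun _ _ => hfg
  obtain ⟨d, hd⟩ : ∃ d, coeff d f ≠ coeff d g := by
    by_contra! h
    exact hfg (ext h)
  filter_upwards [eventually_ge_atTop (d.sum fun _ v => v)] with N hN hagree
  exact absurd (hagree d hN) hd

theorem _root_.Set.Finite.eventually_eq_of_coeff_eq_of_degree_le {s : Set (MvPowerSeries σ R)}
    (hs : s.Finite) :
    ∀ᶠ N in atTop, ∀ f ∈ s, ∀ g ∈ s,
      (∀ d : σ →₀ ℕ, (d.sum fun _ v => v) ≤ N → coeff d f = coeff d g) → f = g :=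
  (eventually_all_finite hs).2 fun f _ => (eventually_all_finite hs).2 fun g _ =>
    MvPowerSeries.eventually_eq_of_coeff_eq_of_degree_le f g

end MvPowerSeries

open MvPowerSeries in
/-- Lemma 4.3. -/
theorem stmt_6 (m J : ℕ) (a : Fin (J + 1) → MvPowerSeries (Fin m) ℂ)
    (haJ : a (Fin.last J) ≠ 0) :
    ∃ mP : ℕ, 0 < mP ∧
      ∀ h h' : MvPowerSeries (Fin m) ℂ,
        ∑ j : Fin (J + 1), a j * h ^ (j : ℕ) = 0 →
        ∑ j : Fin (J + 1), a j * h' ^ (j : ℕ) = 0 →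
        (∀ d : Fin m →₀ ℕ, (d.sum fun _ v => v) ≤ mP →
          coeff (R := ℂ) d h = coeff (R := ℂ) d h') →
        h = h' := by
  have : IsDomain (MvPowerSeries (Fin m) ℂ) := NoZeroDivisors.to_isDomain _
  obtain ⟨mP, hsep, hpos⟩ :=
    ((finite_setOf_sum_mul_pow_eq_zero a haJ).eventually_eq_of_coeff_eq_of_degree_le.and
      (eventually_gt_atTop 0)).exists
  exact ⟨mP, hpos, fun h h' hh hh' => hsep h hh h' hh'⟩
end

section
/- Let Q'(s,χ) ∈ ℂ⟦s₁,…,s_{n'}, χ₁,…,χ_{n'}⟧ be a formal power series, written Q'(s,χ) = Σ_α Q'_α(s) χ^α over multi-indices α ∈ ℤ₊^{n'}. Suppose the ideal generated by all coefficients Q'_α in ℂ⟦s⟧ has finite codimension (essential finiteness), and suppose μ : (ℂ,0) → (ℂ^{n'},0) is a formal curve with μ ≢ 0. Then Q'_α(μ(t)) is not identically zero for some α; i.e., the power series Σ_α Q'_α(μ(t)) χ^α in ℂ⟦t,χ⟧ is nonzero. -/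
/-!
If every coefficient `Q'_α` vanished along `μ`, the coefficient ideal would lie in the kernel of
the substitution homomorphism `s ↦ μ`, which would then factor through the finite-dimensional
quotient. Hence every `μ i` would be integral over `ℂ` inside the domain `ℂ⟦t⟧`, so a constant
(`ℂ` is algebraically closed), and therefore `0` since `μ i (0) = 0`.
-/

open MvPowerSeries Finsupp

theorem MvPowerSeries.coeff_prod_pow_eq_zero_of_degree_lt {σ τ R : Type*} [CommSemiring R]
    {F : σ → MvPowerSeries τ R} (hF : ∀ s, constantCoeff (F s) = 0)
    {e : σ →₀ ℕ} {d : τ →₀ ℕ} (hd : degree d < degree e) :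
    coeff d (e.prod fun s n => F s ^ n) = 0 := by
  refine coeff_of_lt_order (lt_of_lt_of_le (b := ((degree e : ℕ) : ℕ∞)) (by exact_mod_cast hd) ?_)
  calc ((degree e : ℕ) : ℕ∞) = ∑ s ∈ e.support, (e s : ℕ∞) := by simp [degree_apply]
    _ ≤ ∑ s ∈ e.support, (F s ^ e s).order :=
        Finset.sum_le_sum fun s _ => le_order_pow_of_constantCoeff_eq_zero _ (hF s)
    _ ≤ _ := le_order_prod _ _

theorem MvPowerSeries.coeff_subst_eq_zero_of_forall_degree_le {σ τ R : Type*} [CommRing R]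
    {F : σ → MvPowerSeries τ R} (ha : HasSubst F) (hF : ∀ s, constantCoeff (F s) = 0)
    {f : MvPowerSeries σ R} {d : τ →₀ ℕ} (hf : ∀ e, degree e ≤ degree d → coeff e f = 0) :
    coeff d (subst F f) = 0 := by
  rw [coeff_subst ha]
  refine finsum_eq_zero_of_forall_eq_zero fun e => ?_
  rcases le_or_gt (degree e) (degree d) with he | he
  · rw [hf e he, zero_smul]
  · rw [coeff_prod_pow_eq_zero_of_degree_lt hF he, smul_zero]

/-- Without `Nonempty σ` this fails: the truncation box in `substPS` is then empty. -/
theorem substPS_eq_subst {σ τ : Type*} [Fintype σ] [DecidableEq σ] [Nonempty σ]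
    {F : σ → MvPowerSeries τ ℂ} (hF : ∀ s, constantCoeff (F s) = 0) (g : MvPowerSeries σ ℂ) :
    substPS F g = subst F g := by
  ext d
  set N : σ →₀ ℕ := equivFunOnFinite.symm fun _ => (d.sum fun _ v => v) + 1
  have hN : ∀ e : σ →₀ ℕ, degree e ≤ degree d → e < N := by
    intro e he
    have hlt : ∀ s, e s < N s := fun s => by
      have := le_degree s e
      change _ < degree d + 1
      omega
    refine lt_of_le_of_ne (fun s => (hlt s).le) fun h => ?_
    have := hlt (Classical.arbitrary σ)
    rw [h] at this
    exact lt_irrefl _ this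
  have ha := hasSubst_of_constantCoeff_zero hF
  have htrunc : coeff d (substPS F g) = coeff d (subst F (trunc ℂ N g : MvPowerSeries σ ℂ)) := by
    rw [subst_coe, coeff_apply]; rfl
  rw [htrunc, ← sub_eq_zero, ← map_sub, ← subst_sub ha]
  refine coeff_subst_eq_zero_of_forall_degree_le ha hF fun e he => ?_
  rw [map_sub, MvPolynomial.coeff_coe, coeff_trunc, if_pos (hN e he), sub_self]

theorem IsIntegral.mem_range_algebraMap_of_isAlgClosed {k A : Type*} [Field k] [IsAlgClosed k]
    [CommRing A] [IsDomain A] [Algebra k A] {x : A} (hx : IsIntegral k x) :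
    x ∈ (algebraMap k A).range :=
  minpoly.mem_range_of_degree_eq_one k x
    (IsAlgClosed.degree_eq_one_of_irreducible k (minpoly.irreducible hx))

theorem MvPowerSeries.eq_zero_of_isIntegral_of_constantCoeff_eq_zero {σ k : Type*} [Field k]
    [IsAlgClosed k] {f : MvPowerSeries σ k} (hf : IsIntegral k f) (h0 : constantCoeff f = 0) :
    f = 0 := by
  have : IsDomain (MvPowerSeries σ k) := NoZeroDivisors.to_isDomain _
  obtain ⟨c, rfl⟩ := hf.mem_range_algebraMap_of_isAlgClosed
  rw [← c_eq_algebraMap, constantCoeff_C] at h0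
  rw [h0, map_zero]

open MvPowerSeries in
/-- `Qc α` is the coefficient `Q'_α(s)` of `χ^α` in `Q'(s, χ)`. -/
theorem stmt_15 (n' : ℕ) (Qc : (Fin n' →₀ ℕ) → MvPowerSeries (Fin n') ℂ)
    (hfin : FiniteDimensional ℂ
      (MvPowerSeries (Fin n') ℂ ⧸ Ideal.span (Set.range Qc)))
    (μ : Fin n' → MvPowerSeries Unit ℂ)
    (hμ0 : ∀ i, constantCoeff (σ := _) (R := ℂ) (μ i) = 0) (hμ : μ ≠ 0) :
    ∃ α : Fin n' →₀ ℕ, substPS μ (Qc α) ≠ 0 := by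
  have : Nonempty (Fin n') := by
    by_contra h
    exact hμ (funext fun i => (h ⟨i⟩).elim)
  by_contra! hQc
  have hμsubst : HasSubst μ := hasSubst_of_constantCoeff_zero hμ0
  let φ := substAlgHom (R := ℂ) hμsubst
  have hker : Ideal.span (Set.range Qc) ≤ RingHom.ker φ := by
    rw [Ideal.span_le]
    rintro _ ⟨α, rfl⟩
    simpa [φ, ← substPS_eq_subst hμ0] using hQc α
  let ψ := Ideal.Quotient.liftₐ _ φ hker
  have hψX (i : Fin n') : ψ (Ideal.Quotient.mk _ (X i)) = μ i := substAlgHom_X hμsubst i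
  refine hμ (funext fun i => eq_zero_of_isIntegral_of_constantCoeff_eq_zero ?_ (hμ0 i))
  exact hψX i ▸ (IsIntegral.of_finite ℂ _).map ψ
end
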